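/- Every point of the greedy subset is reachable from a mixed point: for every b ∈ G there exist r ≥ 0 and a finite sequence c_0, c_1, …, c_r of elements of G with c_r = b, with c_0 mixed (t_{c_0,i} ≤ 1 for all i), and with c_{k+1} ∈ R(c_k) for every k < r. Consequently, the greedy algorithm started from the lattice points lying in mixed cells reaches exactly the points of G. -/
import Mathlib


open Finset

/-- The partial sum `Σ_{k=0}^{i-1} a_{k j}` as an integer. -/
def psum (a : ℕ → ℕ → ℕ) (i j : ℕ) : ℤ := ∑ k ∈ Finset.range i, (a k j : ℤ)

/-- `b ∈ B`, i.e. `0 ≤ b_j < Σ_{i=0}^{n} a_{ij}` for all `j`. -/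
def memB (n : ℕ) (a : ℕ → ℕ → ℕ) (b : ℕ → ℤ) : Prop :=
  ∀ j < n, 0 ≤ b j ∧ b j < psum a (n + 1) j

/-- `φ` is the type function of `b`:
`Σ_{k=0}^{φ(j)-1} a_{kj} ≤ b_j < Σ_{k=0}^{φ(j)} a_{kj}` for all `j < n`. -/
def IsTypeFun (n : ℕ) (a : ℕ → ℕ → ℕ) (b : ℕ → ℤ) (φ : ℕ → ℕ) : Prop :=
  ∀ j < n, φ j ≤ n ∧ psum a (φ j) j ≤ b j ∧ b j < psum a (φ j + 1) j

/-- The type vector `t_{b,i} = #{j : φ_b(j) = i}`. -/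
def typeVec (n : ℕ) (φ : ℕ → ℕ) (i : ℕ) : ℕ :=
  ((Finset.range n).filter fun j => φ j = i).card

/-- `ib` is the row content of a point with type function `φ`:
the largest `i ∈ {0,…,n}` with `t_{b,i} = 0`. -/
def IsRowContent (n : ℕ) (φ : ℕ → ℕ) (ib : ℕ) : Prop :=
  ib ≤ n ∧ typeVec n φ ib = 0 ∧ ∀ i ≤ n, typeVec n φ i = 0 → i ≤ ib

/-- The vector `a(b)`: `a(b)_j = 0` if `φ_b(j) < i(b)` and `a(b)_j = a_{i(b) j}` otherwise. -/
def ashift (a : ℕ → ℕ → ℕ) (φ : ℕ → ℕ) (ib j : ℕ) : ℤ :=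
  if φ j < ib then 0 else (a ib j : ℤ)

/-- `b' ∈ R(b) = {b - a(b) + c : c ∈ A_{i(b)}}`. -/
def memR (n : ℕ) (a : ℕ → ℕ → ℕ) (b : ℕ → ℤ) (φ : ℕ → ℕ) (ib : ℕ) (b' : ℕ → ℤ) : Prop :=
  ∀ j < n, b j - ashift a φ ib j ≤ b' j ∧ b' j ≤ b j - ashift a φ ib j + (a ib j : ℤ)

/-- The greedy condition: `Σ_{i=0}^{I} t_{b,i} ≤ I + 1` for all `I < n`. -/
def memG (n : ℕ) (φ : ℕ → ℕ) : Prop :=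
  ∀ I < n, ∑ i ∈ Finset.range (I + 1), typeVec n φ i ≤ I + 1

/-- A point is mixed if `t_{b,i} ≤ 1` for all `i ∈ {0,…,n}`. -/
def Mixed (n : ℕ) (φ : ℕ → ℕ) : Prop := ∀ i ≤ n, typeVec n φ i ≤ 1

/-- `Ib = I_b`: for non-mixed `b` the largest `i` with `t_{b,i} ≥ 2`; for mixed `b`, `0`. -/
def IsIb (n : ℕ) (φ : ℕ → ℕ) (Ib : ℕ) : Prop :=
  (2 ≤ typeVec n φ Ib ∧ ∀ i, 2 ≤ typeVec n φ i → i ≤ Ib) ∨ (Mixed n φ ∧ Ib = 0)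

/-- `g_b = #{i < I_b : t_{b,i} = 0}`. -/
def gval (n : ℕ) (φ : ℕ → ℕ) (Ib : ℕ) : ℕ :=
  ((Finset.range Ib).filter fun i => typeVec n φ i = 0).card

lemma psum_succ (a : ℕ → ℕ → ℕ) (i j : ℕ) : psum a (i+1) j = psum a i j + a i j :=
  Finset.sum_range_succ _ _

lemma psum_zero (a : ℕ → ℕ → ℕ) (j : ℕ) : psum a 0 j = 0 := Finset.sum_range_zero _

lemma psum_mono (a : ℕ → ℕ → ℕ) {i i' : ℕ} (h : i ≤ i') (j : ℕ) :
    psum a i j ≤ psum a i' j :=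
  Finset.sum_le_sum_of_subset_of_nonneg (Finset.range_subset_range.mpr h)
    (fun k _ _ => Int.natCast_nonneg _)

def cntf (n : ℕ) (ψ : ℕ → ℕ) (m : ℕ) : ℕ := ∑ j ∈ Finset.range n, if ψ j < m then 1 else 0

lemma typeVec_eq_sum (n : ℕ) (ψ : ℕ → ℕ) (i : ℕ) :
    typeVec n ψ i = ∑ j ∈ Finset.range n, if ψ j = i then 1 else 0 := by
  rw [typeVec, Finset.card_filter]

lemma sum_typeVec (n : ℕ) (ψ : ℕ → ℕ) (m : ℕ) :
    ∑ i ∈ Finset.range m, typeVec n ψ i = cntf n ψ m := by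
  simp_rw [typeVec_eq_sum]
  rw [Finset.sum_comm]
  refine Finset.sum_congr rfl fun j _ => ?_
  rw [Finset.sum_ite_eq (Finset.range m) (ψ j) fun _ => (1:ℕ)]
  simp [Finset.mem_range]

lemma update_indicator_sum (n : ℕ) (φ : ℕ → ℕ) {j0 : ℕ} (hj0 : j0 < n) (v : ℕ)
    (p : ℕ → Prop) [DecidablePred p] :
    (∑ j ∈ Finset.range n, if p (Function.update φ j0 v j) then 1 else 0) + (if p (φ j0) then 1 else 0)
      = (∑ j ∈ Finset.range n, if p (φ j) then 1 else 0) + (if p v then 1 else 0) := by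
  have h0 : j0 ∈ Finset.range n := mem_range.mpr hj0
  rw [← Finset.add_sum_erase _ _ h0, ← Finset.add_sum_erase _ (fun j => if p (φ j) then (1:ℕ) else 0) h0]
  have he : ∀ j ∈ (Finset.range n).erase j0,
      (if p (Function.update φ j0 v j) then (1:ℕ) else 0) = if p (φ j) then 1 else 0 := by
    intro j hj
    rw [Function.update_of_ne (Finset.mem_erase.mp hj).1]
  rw [Finset.sum_congr rfl he, Function.update_self]
  omega

lemma cntf_update (n : ℕ) (φ : ℕ → ℕ) {j0 : ℕ} (hj0 : j0 < n) (v m : ℕ) :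
    cntf n (Function.update φ j0 v) m + (if φ j0 < m then 1 else 0)
      = cntf n φ m + (if v < m then 1 else 0) :=
  update_indicator_sum n φ hj0 v (· < m)

lemma typeVec_update (n : ℕ) (φ : ℕ → ℕ) {j0 : ℕ} (hj0 : j0 < n) (v i : ℕ) :
    typeVec n (Function.update φ j0 v) i + (if φ j0 = i then 1 else 0)
      = typeVec n φ i + (if v = i then 1 else 0) := by
  rw [typeVec_eq_sum, typeVec_eq_sum]
  exact update_indicator_sum n φ hj0 v (· = i)

lemma typeVec_zero_iff (n : ℕ) (ψ : ℕ → ℕ) (i : ℕ) :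
    typeVec n ψ i = 0 ↔ ∀ j < n, ψ j ≠ i := by
  simp [typeVec, Finset.card_eq_zero, Finset.filter_eq_empty_iff, Finset.mem_range]

lemma exists_of_typeVec_pos (n : ℕ) (ψ : ℕ → ℕ) (i : ℕ) (h : 0 < typeVec n ψ i) :
    ∃ j, j < n ∧ ψ j = i := by
  obtain ⟨j, hj⟩ := Finset.card_pos.mp h
  simp only [Finset.mem_filter, Finset.mem_range] at hj
  exact ⟨j, hj.1, hj.2⟩

lemma typeVec_eq_zero_of_gt (n : ℕ) (ψ : ℕ → ℕ) (hψ : ∀ j < n, ψ j ≤ n) {i : ℕ} (hi : n < i) :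
    typeVec n ψ i = 0 :=
  (typeVec_zero_iff n ψ i).mpr fun j hj => by have := hψ j hj; omega

lemma typeVec_congr (n : ℕ) (ψ1 ψ2 : ℕ → ℕ) (h : ∀ j < n, ψ1 j = ψ2 j) (i : ℕ) :
    typeVec n ψ1 i = typeVec n ψ2 i := by
  unfold typeVec
  congr 1
  apply Finset.filter_congr
  intro j hj
  simp [h j (Finset.mem_range.mp hj)]

lemma cntf_all (n : ℕ) (ψ : ℕ → ℕ) (hψ : ∀ j < n, ψ j ≤ n) : cntf n ψ (n+1) = n := by
  unfold cntf
  rw [Finset.sum_congr rfl fun j hj => if_pos (by have := hψ j (Finset.mem_range.mp hj); omega)]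
  simp

lemma exists_zero_row (n : ℕ) (ψ : ℕ → ℕ) (hψ : ∀ j < n, ψ j ≤ n) :
    ∃ i, i ≤ n ∧ typeVec n ψ i = 0 := by
  by_contra h
  push_neg at h
  have h1 : ∀ i ∈ Finset.range (n+1), 1 ≤ typeVec n ψ i := by
    intro i hi
    have := h i (by have := Finset.mem_range.mp hi; omega)
    omega
  have h2 := Finset.card_nsmul_le_sum (Finset.range (n+1)) (typeVec n ψ) 1 h1
  rw [sum_typeVec, cntf_all n ψ hψ] at h2
  simp at h2

lemma memG_cnt (n : ℕ) (ψ : ℕ → ℕ) (h : memG n ψ) {m : ℕ} (h1 : 0 < m) (h2 : m ≤ n) :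
    cntf n ψ m ≤ m := by
  obtain ⟨I, rfl⟩ : ∃ I, m = I + 1 := ⟨m - 1, by omega⟩
  rw [← sum_typeVec]
  exact h I (by omega)

lemma memG_of_cnt (n : ℕ) (ψ : ℕ → ℕ) (h : ∀ m, 0 < m → m ≤ n → cntf n ψ m ≤ m) :
    memG n ψ := by
  intro I hI
  rw [sum_typeVec]
  exact h (I+1) (by omega) (by omega)

lemma typefun_unique (n : ℕ) (a : ℕ → ℕ → ℕ) (b1 b2 : ℕ → ℤ) (φ1 φ2 : ℕ → ℕ)
    (h1 : IsTypeFun n a b1 φ1) (h2 : IsTypeFun n a b2 φ2)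
    (hbb : ∀ j < n, b1 j = b2 j) : ∀ j < n, φ1 j = φ2 j := by
  have key : ∀ (ψ1 ψ2 : ℕ → ℕ) (c1 c2 : ℕ → ℤ), IsTypeFun n a c1 ψ1 → IsTypeFun n a c2 ψ2 →
      (∀ j < n, c1 j = c2 j) → ∀ j < n, ψ1 j < ψ2 j → False := by
    intro ψ1 ψ2 c1 c2 g1 g2 gb j hj hlt
    have e1 := (g1 j hj).2.2
    have e2 := (g2 j hj).2.1
    have em := psum_mono a (show ψ1 j + 1 ≤ ψ2 j by omega) j
    have := gb j hj
    omega
  intro j hj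
  rcases Nat.lt_trichotomy (φ1 j) (φ2 j) with h | h | h
  · exact absurd (key φ1 φ2 b1 b2 h1 h2 hbb j hj h) (fun x => x)
  · exact h
  · exact absurd (key φ2 φ1 b2 b1 h2 h1 (fun j hj => (hbb j hj).symm) j hj h) (fun x => x)


lemma cntf_le (n : ℕ) (ψ : ℕ → ℕ) (m : ℕ) : cntf n ψ m ≤ n := by
  unfold cntf
  calc ∑ j ∈ Finset.range n, (if ψ j < m then 1 else 0)
      ≤ ∑ j ∈ Finset.range n, 1 := Finset.sum_le_sum fun j _ => by split <;> omega
    _ = n := by simp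

lemma step_lemma
    (n : ℕ) (hn : 0 < n) (a : ℕ → ℕ → ℕ)
    (hpos : ∀ i ≤ n, ∀ j < n, 0 < a i j)
    (b : ℕ → ℤ) (hb : memB n a b)
    (φ : ℕ → ℕ) (hφ : IsTypeFun n a b φ)
    (hG : memG n φ) (hnm : ¬ Mixed n φ) :
    ∃ b' φ' ib, memB n a b' ∧ IsTypeFun n a b' φ' ∧ memG n φ' ∧ IsRowContent n φ' ib ∧
      memR n a b' φ' ib b ∧ ∑ j ∈ Finset.range n, b' j < ∑ j ∈ Finset.range n, b j := by
  have ha1 : ∀ i ≤ n, ∀ j < n, (1:ℤ) ≤ (a i j : ℤ) := fun i hi j hj => by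
    exact_mod_cast hpos i hi j hj
  have hφn : ∀ j < n, φ j ≤ n := fun j hj => (hφ j hj).1
  have hpsum1 : ∀ i, 1 ≤ i → ∀ j < n, (1:ℤ) ≤ psum a i j := by
    intro i h1 j hj
    have e : psum a 1 j = psum a 0 j + a 0 j := psum_succ a 0 j
    rw [psum_zero] at e
    have h2 := psum_mono a h1 j
    have h3 := ha1 0 (by omega) j hj
    omega
  by_cases hM1 : 2 ≤ typeVec n φ n
  · -- Move all coordinates of row n down to the top of row n-1.
    obtain ⟨m, hm⟩ : ∃ m, n = m + 1 := ⟨n - 1, by omega⟩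
    refine ⟨fun j => if φ j = n then psum a n j - 1 else b j,
            fun j => if φ j = n then m else φ j, n, ?_, ?_, ?_, ?_, ?_, ?_⟩
    · intro j hj
      by_cases h : φ j = n
      · simp only [if_pos h]
        have h1 := hpsum1 n (by omega) j hj
        have h2 := psum_mono a (show n ≤ n+1 by omega) j
        constructor <;> omega
      · simp only [if_neg h]; exact hb j hj
    · intro j hj
      by_cases h : φ j = n
      · simp only [if_pos h]
        have hbj := hφ j hj
        rw [h] at hbj
        have e : psum a (m+1) j = psum a m j + a m j := psum_succ a m j
        have e' : psum a n j = psum a m j + a m j := by rw [hm]; exact e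
        have h3 := ha1 m (by omega) j hj
        refine ⟨by omega, by omega, ?_⟩
        rw [← hm]
        omega
      · simp only [if_neg h]; exact hφ j hj
    · apply memG_of_cnt
      intro m' hm1 hm2
      by_cases h : m' = n
      · rw [h]; exact cntf_le n _ n
      · have hm3 : m' < n := by omega
        have e : cntf n (fun j => if φ j = n then m else φ j) m' = cntf n φ m' := by
          unfold cntf
          refine Finset.sum_congr rfl fun j hj => ?_
          show (if (if φ j = n then m else φ j) < m' then (1:ℕ) else 0) = if φ j < m' then 1 else 0
          by_cases h2 : φ j = n
          · rw [if_pos h2, if_neg (by omega : ¬ m < m'), if_neg (by omega : ¬ φ j < m')]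
          · rw [if_neg h2]
        rw [e]
        exact memG_cnt n φ hG hm1 hm2
    · refine ⟨le_rfl, ?_, fun i hi _ => hi⟩
      rw [typeVec_zero_iff]
      intro j hj
      by_cases h : φ j = n <;> simp [h] <;> omega
    · intro j hj
      have hlt : (if φ j = n then m else φ j) < n := by
        have := hφn j hj
        by_cases h : φ j = n <;> simp [h] <;> omega
      have hsh : ashift a (fun j => if φ j = n then m else φ j) n j = 0 := by
        unfold ashift
        simp only [if_pos hlt]
      simp only [hsh]
      by_cases h : φ j = n
      · simp only [if_pos h]
        have hbj := hφ j hj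
        rw [h] at hbj
        have e : psum a (n+1) j = psum a n j + a n j := psum_succ a n j
        constructor <;> omega
      · simp only [if_neg h]
        have h3 := ha1 n le_rfl j hj
        constructor <;> omega
    · obtain ⟨j0, hj0n, hj0I⟩ := exists_of_typeVec_pos n φ n (by omega)
      apply Finset.sum_lt_sum
      · intro j hj
        by_cases h : φ j = n
        · simp only [if_pos h]
          have hbj := hφ j (Finset.mem_range.mp hj)
          rw [h] at hbj
          omega
        · simp only [if_neg h]; exact le_rfl
      · refine ⟨j0, Finset.mem_range.mpr hj0n, ?_⟩
        simp only [if_pos hj0I]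
        have hbj := hφ j0 hj0n
        rw [hj0I] at hbj
        omega
  · -- rows with multiplicity: I := largest row with t_I ≥ 2 satisfies I < n
    have hex2 : ∃ i, i ≤ n ∧ 2 ≤ typeVec n φ i := by
      unfold Mixed at hnm
      push_neg at hnm
      obtain ⟨i, hi1, hi2⟩ := hnm
      exact ⟨i, hi1, by omega⟩
    obtain ⟨I, hIn, hI2, hImax'⟩ :
        ∃ I, I ≤ n ∧ 2 ≤ typeVec n φ I ∧ ∀ i ≤ n, 2 ≤ typeVec n φ i → i ≤ I := by
      obtain ⟨z, hz1, hz2⟩ := hex2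
      exact ⟨Nat.findGreatest (fun i => 2 ≤ typeVec n φ i) n, Nat.findGreatest_le n,
        Nat.findGreatest_spec (P := fun i => 2 ≤ typeVec n φ i) hz1 hz2,
        fun i hi h0 => Nat.le_findGreatest (P := fun i => 2 ≤ typeVec n φ i) hi h0⟩
    have hImax : ∀ i, I < i → i ≤ n → typeVec n φ i ≤ 1 := by
      intro i h1 h2
      by_contra h
      have := hImax' i h2 (by omega)
      omega
    have hI1 : 1 ≤ I := by
      rcases Nat.eq_zero_or_pos I with h0 | h
      · exfalso
        have h4 := hG 0 hn
        rw [Finset.sum_range_one] at h4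
        rw [h0] at hI2
        omega
      · exact h
    have hIlt : I < n := by
      rcases Nat.lt_or_ge I n with h | h
      · exact h
      · exfalso
        have : I = n := by omega
        rw [this] at hI2
        omega
    obtain ⟨j0, hj0n, hj0I⟩ := exists_of_typeVec_pos n φ I (by omega)
    obtain ⟨i0, hi0n, hi0z, hi0max'⟩ :
        ∃ i0, i0 ≤ n ∧ typeVec n φ i0 = 0 ∧ ∀ i ≤ n, typeVec n φ i = 0 → i ≤ i0 := by
      obtain ⟨z, hz1, hz2⟩ := exists_zero_row n φ hφn
      exact ⟨Nat.findGreatest (fun i => typeVec n φ i = 0) n, Nat.findGreatest_le n,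
        Nat.findGreatest_spec (P := fun i => typeVec n φ i = 0) hz1 hz2,
        fun i hi h0 => Nat.le_findGreatest (P := fun i => typeVec n φ i = 0) hi h0⟩
    have hi0max : ∀ i, i0 < i → i ≤ n → typeVec n φ i ≠ 0 := by
      intro i h1 h2 h0
      have := hi0max' i h2 h0
      omega
    have hIni0 : I ≠ i0 := by
      intro h
      rw [h, hi0z] at hI2
      omega
    have hbj0 := hφ j0 hj0n
    rw [hj0I] at hbj0
    obtain ⟨i1, hi1I⟩ : ∃ i1, I = i1 + 1 := ⟨I - 1, by omega⟩
    have hImow : psum a i1 j0 + 1 ≤ psum a I j0 := by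
      have e := psum_succ a i1 j0
      rw [← hi1I] at e
      have := ha1 i1 (by omega) j0 hj0n
      omega
    rcases Nat.lt_or_ge I i0 with hA | hge
    · -- Case M2 : I < i0.  Move j0 down by a i0 j0 (clamped at top of row I-1).
      have hA1 : (1:ℤ) ≤ (a i0 j0 : ℤ) := ha1 i0 hi0n j0 hj0n
      set D := max (b j0 - (a i0 j0 : ℤ)) (psum a I j0 - 1) with hD
      have hD1 : psum a I j0 - 1 ≤ D := le_max_right _ _
      have hD2 : b j0 - (a i0 j0 : ℤ) ≤ D := le_max_left _ _
      have hDlt : D < b j0 := max_lt (by omega) (by omega)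
      set k0 := if psum a I j0 ≤ D then I else i1 with hk0
      have hk0e : k0 = I ∨ (k0 = i1 ∧ D = psum a I j0 - 1) := by
        rw [hk0]
        split_ifs with h
        · exact Or.inl rfl
        · exact Or.inr ⟨rfl, by omega⟩
      have hk0I : k0 ≤ I := by rcases hk0e with h | h <;> omega
      have hk0row : psum a k0 j0 ≤ D ∧ D < psum a (k0+1) j0 := by
        rw [hk0]
        split_ifs with h
        · exact ⟨h, by omega⟩
        · refine ⟨by omega, ?_⟩
          rw [← hi1I]
          omega
      have hk0i0 : k0 < i0 := by omega
      have hD0 : 0 ≤ D := by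
        have := hpsum1 I hI1 j0 hj0n
        omega
      refine ⟨Function.update b j0 D, Function.update φ j0 k0, i0, ?_, ?_, ?_, ?_, ?_, ?_⟩
      · intro j hj
        by_cases h : j = j0
        · subst h
          rw [Function.update_self]
          have := (hb j hj).2
          exact ⟨hD0, by omega⟩
        · rw [Function.update_of_ne h]; exact hb j hj
      · intro j hj
        by_cases h : j = j0
        · subst h
          rw [Function.update_self, Function.update_self]
          exact ⟨by omega, hk0row.1, hk0row.2⟩
        · rw [Function.update_of_ne h, Function.update_of_ne h]
          exact hφ j hj
      · apply memG_of_cnt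
        intro m' hm1 hm2
        have hc := cntf_update n φ hj0n k0 m'
        rw [hj0I] at hc
        have hGm := memG_cnt n φ hG hm1 hm2
        by_cases h1 : I < m'
        · rw [if_pos h1, if_pos (show k0 < m' by omega)] at hc
          omega
        · by_cases h2 : k0 < m'
          · have hmI : m' = I := by rcases hk0e with h | h <;> omega
            subst hmI
            have hGI := hG m' hIlt
            rw [Finset.sum_range_succ, sum_typeVec] at hGI
            rw [if_neg h1, if_pos h2] at hc
            omega
          · rw [if_neg h1, if_neg h2] at hc
            omega
      · refine ⟨hi0n, ?_, ?_⟩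
        · have ht := typeVec_update n φ hj0n k0 i0
          rw [hj0I, if_neg (by omega : ¬ I = i0), if_neg (by omega : ¬ k0 = i0)] at ht
          omega
        · intro i hi hiz
          by_contra hcon
          have ht := typeVec_update n φ hj0n k0 i
          rw [hj0I, if_neg (by omega : ¬ I = i), if_neg (by omega : ¬ k0 = i)] at ht
          exact hi0max i (by omega) hi (by omega)
      · intro j hj
        by_cases h : j = j0
        · subst h
          have hsh : ashift a (Function.update φ j k0) i0 j = 0 := by
            unfold ashift
            rw [Function.update_self, if_pos (by omega : k0 < i0)]
          rw [Function.update_self, hsh]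
          constructor <;> omega
        · have hφj : φ j ≠ i0 := (typeVec_zero_iff n φ i0).mp hi0z j hj
          have hsh : ashift a (Function.update φ j0 k0) i0 j = ashift a φ i0 j := by
            unfold ashift
            rw [Function.update_of_ne h]
          rw [Function.update_of_ne h, hsh]
          unfold ashift
          have h0 : (0:ℤ) ≤ (a i0 j : ℤ) := Int.natCast_nonneg _
          split_ifs with h2
          · constructor <;> omega
          · constructor <;> omega
      · apply Finset.sum_lt_sum
        · intro j hj
          by_cases h : j = j0
          · subst h
            rw [Function.update_self]
            omega
          · rw [Function.update_of_ne h]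
        · refine ⟨j0, Finset.mem_range.mpr hj0n, ?_⟩
          rw [Function.update_self]
          omega
    · -- Case M3 : i0 < I.  Vacate row I+1 (single point j1) and move j0 down.
      have hB : i0 < I := by omega
      have hI1n : I + 1 ≤ n := hIlt
      have ht1 : typeVec n φ (I+1) = 1 := by
        have hle := hImax (I+1) (by omega) hI1n
        have hne : typeVec n φ (I+1) ≠ 0 := by
          intro h0
          have := hi0max' (I+1) hI1n h0
          omega
        omega
      have ht1' : ((Finset.range n).filter fun j => φ j = I+1).card = 1 := ht1
      obtain ⟨j1, hj1⟩ := Finset.card_eq_one.mp ht1'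
      have hj1m : j1 < n ∧ φ j1 = I + 1 := by
        have hmem : j1 ∈ (Finset.range n).filter fun j => φ j = I+1 := by
          rw [hj1]; exact Finset.mem_singleton_self j1
        simpa [Finset.mem_filter, Finset.mem_range] using hmem
      have hj1u : ∀ j < n, φ j = I+1 → j = j1 := by
        intro j hjn hjI
        have hmem : j ∈ (Finset.range n).filter fun j => φ j = I+1 :=
          Finset.mem_filter.mpr ⟨Finset.mem_range.mpr hjn, hjI⟩
        rw [hj1] at hmem
        exact Finset.mem_singleton.mp hmem
      have hj01 : j0 ≠ j1 := by
        intro h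
        rw [h, hj1m.2] at hj0I
        omega
      have hbj1 := hφ j1 hj1m.1
      rw [hj1m.2] at hbj1
      have haI : (1:ℤ) ≤ (a I j1 : ℤ) := ha1 I (by omega) j1 hj1m.1
      have haI1 : (1:ℤ) ≤ (a (I+1) j1 : ℤ) := ha1 (I+1) hI1n j1 hj1m.1
      have haI1' : (1:ℤ) ≤ (a (I+1) j0 : ℤ) := ha1 (I+1) hI1n j0 hj0n
      have eψ1 : psum a (I+1) j1 = psum a I j1 + a I j1 := psum_succ a I j1
      have eψ2 : psum a (I+1+1) j1 = psum a (I+1) j1 + a (I+1) j1 := psum_succ a (I+1) j1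
      set E := psum a (I+1) j1 - 1 with hE
      have hE0 : 0 ≤ E := by
        have := hpsum1 (I+1) (by omega) j1 hj1m.1
        omega
      have hErow : psum a I j1 ≤ E ∧ E < psum a (I+1) j1 := by omega
      have hElt : E < b j1 := by omega
      have hEub : b j1 ≤ E + (a (I+1) j1 : ℤ) := by omega
      set D := max (b j0 - (a (I+1) j0 : ℤ)) (psum a I j0 - 1) with hD
      have hD1 : psum a I j0 - 1 ≤ D := le_max_right _ _
      have hD2 : b j0 - (a (I+1) j0 : ℤ) ≤ D := le_max_left _ _
      have hDlt : D < b j0 := max_lt (by omega) (by omega)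
      set k0 := if psum a I j0 ≤ D then I else i1 with hk0
      have hk0e : k0 = I ∨ (k0 = i1 ∧ D = psum a I j0 - 1) := by
        rw [hk0]
        split_ifs with h
        · exact Or.inl rfl
        · exact Or.inr ⟨rfl, by omega⟩
      have hk0I : k0 ≤ I := by rcases hk0e with h | h <;> omega
      have hk0row : psum a k0 j0 ≤ D ∧ D < psum a (k0+1) j0 := by
        rw [hk0]
        split_ifs with h
        · exact ⟨h, by omega⟩
        · refine ⟨by omega, ?_⟩
          rw [← hi1I]
          omega
      have hD0 : 0 ≤ D := by
        have := hpsum1 I hI1 j0 hj0n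
        omega
      have evφ0 : (Function.update (Function.update φ j1 I) j0 k0) j0 = k0 :=
        Function.update_self _ _ _
      have evφ1 : (Function.update (Function.update φ j1 I) j0 k0) j1 = I := by
        rw [Function.update_of_ne (Ne.symm hj01), Function.update_self]
      have evφ : ∀ j, j ≠ j0 → j ≠ j1 →
          (Function.update (Function.update φ j1 I) j0 k0) j = φ j := by
        intro j h0 h1
        rw [Function.update_of_ne h0, Function.update_of_ne h1]
      have evb0 : (Function.update (Function.update b j1 E) j0 D) j0 = D :=
        Function.update_self _ _ _
      have evb1 : (Function.update (Function.update b j1 E) j0 D) j1 = E := by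
        rw [Function.update_of_ne (Ne.symm hj01), Function.update_self]
      have evb : ∀ j, j ≠ j0 → j ≠ j1 →
          (Function.update (Function.update b j1 E) j0 D) j = b j := by
        intro j h0 h1
        rw [Function.update_of_ne h0, Function.update_of_ne h1]
      refine ⟨Function.update (Function.update b j1 E) j0 D,
        Function.update (Function.update φ j1 I) j0 k0, I + 1, ?_, ?_, ?_, ?_, ?_, ?_⟩
      · intro j hj
        by_cases h0 : j = j0
        · subst h0
          rw [evb0]
          have := (hb j hj).2
          exact ⟨hD0, by omega⟩
        · by_cases h1 : j = j1
          · subst h1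
            rw [evb1]
            have := (hb j hj).2
            exact ⟨hE0, by omega⟩
          · rw [evb j h0 h1]
            exact hb j hj
      · intro j hj
        by_cases h0 : j = j0
        · subst h0
          rw [evφ0, evb0]
          exact ⟨by omega, hk0row.1, hk0row.2⟩
        · by_cases h1 : j = j1
          · subst h1
            rw [evφ1, evb1]
            exact ⟨by omega, hErow.1, hErow.2⟩
          · rw [evφ j h0 h1, evb j h0 h1]
            exact hφ j hj
      · apply memG_of_cnt
        intro m' hm1 hm2
        have hc1 := cntf_update n φ hj1m.1 I m'
        rw [hj1m.2] at hc1
        have hc2 := cntf_update n (Function.update φ j1 I) hj0n k0 m'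
        rw [Function.update_of_ne hj01, hj0I] at hc2
        have hGm := memG_cnt n φ hG hm1 hm2
        by_cases h1 : I + 1 < m'
        · rw [if_pos h1, if_pos (by omega : I < m')] at hc1
          rw [if_pos (by omega : I < m'), if_pos (by omega : k0 < m')] at hc2
          omega
        · by_cases h2 : I < m'
          · have hm' : m' = I + 1 := by omega
            subst hm'
            have htot : cntf n φ (n+1) = n := cntf_all n φ hφn
            have hsplit : ∑ i ∈ Finset.range (I+1), typeVec n φ i
                + ∑ i ∈ Finset.Ico (I+1) (n+1), typeVec n φ i
                = ∑ i ∈ Finset.range (n+1), typeVec n φ i := by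
              simp only [Finset.range_eq_Ico]
              exact Finset.sum_Ico_consecutive _ (by omega) (by omega)
            rw [sum_typeVec, sum_typeVec] at hsplit
            have hlow : ∀ i ∈ Finset.Ico (I+1) (n+1), 1 ≤ typeVec n φ i := by
              intro i hi
              rw [Finset.mem_Ico] at hi
              have := hi0max i (by omega) (by omega)
              omega
            have hcard : n + 1 - (I + 1) ≤ ∑ i ∈ Finset.Ico (I+1) (n+1), typeVec n φ i := by
              have h4 := Finset.card_nsmul_le_sum (Finset.Ico (I+1) (n+1)) (typeVec n φ) 1 hlow
              simpa [Nat.card_Ico] using h4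
            rw [if_neg h1, if_pos h2] at hc1
            rw [if_pos h2, if_pos (by omega : k0 < I + 1)] at hc2
            omega
          · rw [if_neg h1, if_neg h2] at hc1
            rw [if_neg h2] at hc2
            by_cases h3 : k0 < m'
            · have hmI : m' = I := by rcases hk0e with h | h <;> omega
              subst hmI
              have hGI := hG m' hIlt
              rw [Finset.sum_range_succ, sum_typeVec] at hGI
              rw [if_pos h3] at hc2
              omega
            · rw [if_neg h3] at hc2
              omega
      · refine ⟨hI1n, ?_, ?_⟩
        · have e1 := typeVec_update n φ hj1m.1 I (I+1)
          rw [hj1m.2, if_pos rfl, if_neg (by omega : ¬ I = I+1)] at e1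
          have e2 := typeVec_update n (Function.update φ j1 I) hj0n k0 (I+1)
          rw [Function.update_of_ne hj01, hj0I,
            if_neg (by omega : ¬ I = I+1), if_neg (by omega : ¬ k0 = I+1)] at e2
          omega
        · intro i hi hiz
          by_contra hcon
          have e1 := typeVec_update n φ hj1m.1 I i
          rw [hj1m.2, if_neg (by omega : ¬ I+1 = i), if_neg (by omega : ¬ I = i)] at e1
          have e2 := typeVec_update n (Function.update φ j1 I) hj0n k0 i
          rw [Function.update_of_ne hj01, hj0I,
            if_neg (by omega : ¬ I = i), if_neg (by omega : ¬ k0 = i)] at e2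
          exact hi0max i (by omega) hi (by omega)
      · intro j hj
        by_cases h0 : j = j0
        · subst h0
          have hsh : ashift a (Function.update (Function.update φ j1 I) j k0) (I+1) j = 0 := by
            unfold ashift
            rw [evφ0, if_pos (by omega : k0 < I + 1)]
          rw [evb0, hsh]
          constructor <;> omega
        · by_cases h1 : j = j1
          · subst h1
            have hsh : ashift a (Function.update (Function.update φ j I) j0 k0) (I+1) j = 0 := by
              unfold ashift
              rw [evφ1, if_pos (by omega : I < I + 1)]
            rw [evb1, hsh]
            constructor <;> omega
          · have hφj : φ j ≠ I + 1 := fun hc => h1 (hj1u j hj hc)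
            have hsh : ashift a (Function.update (Function.update φ j1 I) j0 k0) (I+1) j
                = ashift a φ (I+1) j := by
              unfold ashift
              rw [evφ j h0 h1]
            rw [evb j h0 h1, hsh]
            unfold ashift
            have hz : (0:ℤ) ≤ (a (I+1) j : ℤ) := Int.natCast_nonneg _
            split_ifs with h2
            · constructor <;> omega
            · constructor <;> omega
      · apply Finset.sum_lt_sum
        · intro j hj
          by_cases h0 : j = j0
          · subst h0
            rw [evb0]
            omega
          · by_cases h1 : j = j1
            · subst h1
              rw [evb1]
              omega
            · rw [evb j h0 h1]
        · refine ⟨j0, Finset.mem_range.mpr hj0n, ?_⟩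
          rw [evb0]
          omega

theorem greedy_reachable_from_mixed
    (n : ℕ) (hn : 0 < n) (a : ℕ → ℕ → ℕ)
    (hpos : ∀ i ≤ n, ∀ j < n, 0 < a i j)
    (hord : ∀ j < n, ∀ i i' : ℕ, i ≤ i' → i' < n → a i j ≤ a i' j)
    (b : ℕ → ℤ) (hb : memB n a b)
    (φ : ℕ → ℕ) (hφ : IsTypeFun n a b φ)
    (hG : memG n φ) :
    ∃ (r : ℕ) (c : ℕ → ℕ → ℤ) (ψ : ℕ → ℕ → ℕ),
      (∀ k ≤ r, memB n a (c k) ∧ IsTypeFun n a (c k) (ψ k) ∧ memG n (ψ k)) ∧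
      (∀ j < n, c r j = b j) ∧
      Mixed n (ψ 0) ∧
      (∀ k < r, ∃ ib : ℕ, IsRowContent n (ψ k) ib ∧ memR n a (c k) (ψ k) ib (c (k + 1))) := by
  clear hord
  suffices H : ∀ N : ℕ, ∀ b : ℕ → ℤ, ∀ φ : ℕ → ℕ, memB n a b → IsTypeFun n a b φ →
      memG n φ → (∑ j ∈ Finset.range n, b j).toNat ≤ N →
      ∃ (r : ℕ) (c : ℕ → ℕ → ℤ) (ψ : ℕ → ℕ → ℕ),
        (∀ k ≤ r, memB n a (c k) ∧ IsTypeFun n a (c k) (ψ k) ∧ memG n (ψ k)) ∧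
        (∀ j < n, c r j = b j) ∧
        Mixed n (ψ 0) ∧
        (∀ k < r, ∃ ib : ℕ, IsRowContent n (ψ k) ib ∧ memR n a (c k) (ψ k) ib (c (k + 1))) by
    exact H _ b φ hb hφ hG le_rfl
  intro N
  induction N with
  | zero =>
    intro b φ hb hφ hG hsum
    by_cases hmix : Mixed n φ
    · exact ⟨0, fun _ => b, fun _ => φ, fun k _ => ⟨hb, hφ, hG⟩, fun j _ => rfl, hmix,
        fun k hk => absurd hk (by omega)⟩
    · exfalso
      obtain ⟨b', φ', ib, hb', hφ', hG', hrc', hR', hlt⟩ :=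
        step_lemma n hn a hpos b hb φ hφ hG hmix
      have h0b : 0 ≤ ∑ j ∈ Finset.range n, b' j :=
        Finset.sum_nonneg fun j hj => (hb' j (Finset.mem_range.mp hj)).1
      omega
  | succ N ih =>
    intro b φ hb hφ hG hsum
    by_cases hmix : Mixed n φ
    · exact ⟨0, fun _ => b, fun _ => φ, fun k _ => ⟨hb, hφ, hG⟩, fun j _ => rfl, hmix,
        fun k hk => absurd hk (by omega)⟩
    · obtain ⟨b', φ', ib, hb', hφ', hG', hrc', hR', hlt⟩ :=
        step_lemma n hn a hpos b hb φ hφ hG hmix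
      have h0b : 0 ≤ ∑ j ∈ Finset.range n, b' j :=
        Finset.sum_nonneg fun j hj => (hb' j (Finset.mem_range.mp hj)).1
      have hsum' : (∑ j ∈ Finset.range n, b' j).toNat ≤ N := by omega
      obtain ⟨r', c', ψ', hall, hend, hmix0, hstep⟩ := ih b' φ' hb' hφ' hG' hsum'
      refine ⟨r' + 1,
        fun k => if k < r' then c' k else if k = r' then b' else b,
        fun k => if k < r' then ψ' k else if k = r' then φ' else φ, ?_, ?_, ?_, ?_⟩
      · intro k hk
        by_cases h1 : k < r'
        · simp only [if_pos h1]
          exact hall k (le_of_lt h1)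
        · by_cases h2 : k = r'
          · simp only [if_neg h1, if_pos h2]
            exact ⟨hb', hφ', hG'⟩
          · simp only [if_neg h1, if_neg h2]
            exact ⟨hb, hφ, hG⟩
      · intro j hj
        simp only [if_neg (show ¬ r' + 1 < r' by omega), if_neg (show ¬ r' + 1 = r' by omega)]
      · by_cases h1 : 0 < r'
        · simp only [if_pos h1]
          exact hmix0
        · have hr0 : r' = 0 := by omega
          simp only [if_neg (by omega : ¬ (0:ℕ) < r'), if_pos hr0.symm ]
          have hagree : ∀ j < n, b' j = c' 0 j := by
            intro j hj
            rw [← hr0]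
            exact (hend j hj).symm
          have hu := typefun_unique n a b' (c' 0) φ' (ψ' 0) hφ' (hall 0 (by omega)).2.1 hagree
          intro i hi
          rw [typeVec_congr n φ' (ψ' 0) hu i]
          exact hmix0 i hi
      · intro k hk
        by_cases h1 : k + 1 < r'
        · simp only [if_pos (show k < r' by omega), if_pos h1]
          exact hstep k (by omega)
        · by_cases h2 : k + 1 = r'
          · have hk' : k < r' := by omega
            obtain ⟨ib2, hrc2, hR2⟩ := hstep k (by omega)
            refine ⟨ib2, ?_, ?_⟩
            · simp only [if_pos hk']
              exact hrc2
            · simp only [if_pos hk', if_neg h1, if_pos h2]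
              intro j hj
              have h3 := hR2 j hj
              rw [h2] at h3
              rw [hend j hj] at h3
              exact h3
          · have h3 : k = r' := by omega
            subst h3
            simp only [lt_irrefl, if_neg (show ¬ k < k by omega), if_pos rfl,
              if_neg (show ¬ k + 1 < k by omega), if_neg (show ¬ k + 1 = k by omega)]
            exact ⟨ib, hrc', hR'⟩
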